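/- Main theorem: Let G be an infinite connected graph with uniformly bounded vertex degrees, ω : V → ℝ₊* a vertex weight and c : E → ℝ₊* a conductance. Set a_{xy} = c_{xy}/(ω_x ω_y). If the metric δ_a (edge {x,y} having length 1/√(a_{xy})) is complete, then the weighted Laplacian Δ_{ω,c} with domain C₀(V) ⊂ ℓ²_ω(V) is essentially self-adjoint. -/

import Mathlib

open Finset

variable {V : Type*}

/-- Weighted Laplacian: `(Δ_{ω,c} f)(x) = (1/ω_x²) Σ_{y∼x} c_{xy}(f(x) − f(y))`. -/
noncomputable def lapW (G : SimpleGraph V) [∀ x : V, Fintype (G.neighborSet x)]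
    (ω : V → ℝ) (c : V → V → ℝ) (f : V → ℝ) (x : V) : ℝ :=
  (1 / (ω x) ^ 2) * ∑ y ∈ G.neighborFinset x, c x y * (f x - f y)

/-- Schrödinger operator: `(Δ_{1,a} + W) f (x) = Σ_{y∼x} a_{xy}(f(x) − f(y)) + W(x) f(x)`. -/
noncomputable def schrod (G : SimpleGraph V) [∀ x : V, Fintype (G.neighborSet x)]
    (a : V → V → ℝ) (W : V → ℝ) (f : V → ℝ) (x : V) : ℝ :=
  (∑ y ∈ G.neighborFinset x, a x y * (f x - f y)) + W x * f x

/-- Length of a walk, where an edge `{x,y}` has length `1/√(a_{xy})`. -/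
noncomputable def wlen (G : SimpleGraph V) (a : V → V → ℝ) {x y : V} (p : G.Walk x y) : ℝ :=
  (p.darts.map fun d => 1 / Real.sqrt (a d.toProd.1 d.toProd.2)).sum

/-- The weighted path metric `δ_a` on the graph. -/
noncomputable def pdist (G : SimpleGraph V) (a : V → V → ℝ) (x y : V) : ℝ :=
  sInf {L | ∃ p : G.Walk x y, wlen G a p = L}

/-- Metric completeness of `(V, δ_a)`: every Cauchy sequence converges. -/
def metComplete (G : SimpleGraph V) (a : V → V → ℝ) : Prop :=
  ∀ u : ℕ → V,
    (∀ ε : ℝ, 0 < ε → ∃ N : ℕ, ∀ m ≥ N, ∀ n ≥ N, pdist G a (u m) (u n) < ε) →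
      ∃ x : V, ∀ ε : ℝ, 0 < ε → ∃ N : ℕ, ∀ n ≥ N, pdist G a (u n) x < ε

/-!
Balls of `δ_a` are finite. Otherwise, since every vertex has finitely many neighbours, one can walk
from the centre greedily, always to a neighbour whose ball of the remaining radius is still
infinite (König's argument). This gives an infinite path of finite length, hence a Cauchy sequence;
by completeness it converges, which is impossible because `δ_a` is discrete.

For `f ∈ ℓ²_ω` with `Δ_{ω,c} f + f = 0`, test the equation against `η² f`, where
`η = (1 - δ_a(o, ·)/R)₊` is finitely supported and satisfies `|η x - η y| ≤ 1/(R √a_{xy})` on edges.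
Green's formula gives `Σ ω² η² f² ≤ ½ Σ_{x∼y} c_{xy} f(x) f(y) (η x - η y)² ≤ N ‖f‖² / (2R²)`, and
letting `R → ∞` yields `f(o) = 0`.
-/

open SimpleGraph

section PathMetric

variable {G : SimpleGraph V} {a : V → V → ℝ}

lemma wlen_nonneg {x y : V} (p : G.Walk x y) : 0 ≤ wlen G a p :=
  List.sum_nonneg fun t ht => by
    obtain ⟨d, -, rfl⟩ := List.mem_map.1 ht
    positivity

@[simp]
lemma wlen_nil {x : V} : wlen G a (Walk.nil : G.Walk x x) = 0 := by
  simp [wlen]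

lemma wlen_cons {x y z : V} (h : G.Adj x y) (p : G.Walk y z) :
    wlen G a (Walk.cons h p) = 1 / √(a x y) + wlen G a p := by
  simp [wlen]

lemma wlen_append {x y z : V} (p : G.Walk x y) (q : G.Walk y z) :
    wlen G a (p.append q) = wlen G a p + wlen G a q := by
  simp [wlen]

lemma wlen_reverse (hsym : ∀ x y, a x y = a y x) {x y : V} (p : G.Walk x y) :
    wlen G a p.reverse = wlen G a p := by
  simp only [wlen, Walk.darts_reverse, List.map_reverse, List.sum_reverse, List.map_map]
  congr 1
  exact List.map_congr_left fun d _ => by simp [Dart.symm, hsym d.toProd.1]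

lemma pdist_nonneg (x y : V) : 0 ≤ pdist G a x y :=
  Real.sInf_nonneg <| by
    rintro L ⟨p, rfl⟩
    exact wlen_nonneg p

lemma pdist_le_wlen {x y : V} (p : G.Walk x y) : pdist G a x y ≤ wlen G a p :=
  csInf_le ⟨0, by rintro L ⟨q, rfl⟩; exact wlen_nonneg q⟩ ⟨p, rfl⟩

lemma le_pdist {x y : V} {b : ℝ} (hxy : G.Reachable x y) (hb : ∀ p : G.Walk x y, b ≤ wlen G a p) :
    b ≤ pdist G a x y :=
  le_csInf ⟨wlen G a hxy.some, hxy.some, rfl⟩ (by rintro L ⟨p, rfl⟩; exact hb p)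

lemma exists_wlen_lt {x y : V} {s : ℝ} (hxy : G.Reachable x y) (h : pdist G a x y < s) :
    ∃ p : G.Walk x y, wlen G a p < s := by
  obtain ⟨L, ⟨p, rfl⟩, hp⟩ := exists_lt_of_csInf_lt (by exact ⟨_, hxy.some, rfl⟩) h
  exact ⟨p, hp⟩

lemma pdist_self (x : V) : pdist G a x x = 0 :=
  le_antisymm (by simpa using pdist_le_wlen (a := a) (Walk.nil : G.Walk x x)) (pdist_nonneg x x)

lemma pdist_le_of_adj {x y : V} (h : G.Adj x y) : pdist G a x y ≤ 1 / √(a x y) := by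
  simpa [wlen_cons] using pdist_le_wlen (a := a) (Walk.cons h Walk.nil)

lemma pdist_comm (hG : G.Preconnected) (hsym : ∀ x y, a x y = a y x) (x y : V) :
    pdist G a x y = pdist G a y x := by
  have key : ∀ u v : V, pdist G a u v ≤ pdist G a v u := fun u v =>
    le_pdist (hG v u) fun p => (pdist_le_wlen p.reverse).trans_eq (wlen_reverse hsym p)
  exact le_antisymm (key x y) (key y x)

lemma pdist_triangle (hG : G.Preconnected) (x y z : V) :
    pdist G a x z ≤ pdist G a x y + pdist G a y z := by
  refine le_of_forall_pos_lt_add fun ε hε => ?_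
  obtain ⟨p, hp⟩ := exists_wlen_lt (hG x y) (lt_add_of_pos_right (pdist G a x y) (half_pos hε))
  obtain ⟨q, hq⟩ := exists_wlen_lt (hG y z) (lt_add_of_pos_right (pdist G a y z) (half_pos hε))
  calc pdist G a x z ≤ wlen G a (p.append q) := pdist_le_wlen _
    _ = wlen G a p + wlen G a q := wlen_append p q
    _ < pdist G a x y + pdist G a y z + ε := by linarith

lemma pdist_le_sum_range (hG : G.Preconnected) {x : ℕ → V} (hx : ∀ n, G.Adj (x n) (x (n + 1)))
    {m n : ℕ} (hmn : m ≤ n) :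
    pdist G a (x m) (x n) ≤
      ∑ k ∈ range n, 1 / √(a (x k) (x (k + 1))) - ∑ k ∈ range m, 1 / √(a (x k) (x (k + 1))) := by
  induction n, hmn using Nat.le_induction with
  | base => simp [pdist_self]
  | succ n hmn ih =>
    rw [sum_range_succ]
    linarith [pdist_triangle (a := a) hG (x m) (x n) (x (n + 1)), pdist_le_of_adj (a := a) (hx n)]

lemma pos_of_infinite_pdist_lt {x : V} {s : ℝ} (h : {z | pdist G a x z < s}.Infinite) : 0 < s := by
  obtain ⟨z, hz⟩ := h.nonempty
  exact (pdist_nonneg x z).trans_lt hz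

end PathMetric

section FiniteBalls

variable {G : SimpleGraph V} [∀ x : V, Fintype (G.neighborSet x)] {a : V → V → ℝ}

lemma exists_pos_le_pdist (hG : G.Preconnected) (ha : ∀ x y, G.Adj x y → 0 < a x y) (x : V) :
    ∃ ε > 0, ∀ u ≠ x, ε ≤ pdist G a x u := by
  classical
  -- `insert 1` keeps the set nonempty when `x` has no neighbours
  let lengths := insert 1 ((G.neighborFinset x).image fun y => 1 / √(a x y))
  refine ⟨lengths.min' (insert_nonempty _ _), ?_, fun u hu => le_pdist (hG x u) fun p => ?_⟩
  · refine (lengths.lt_min'_iff _).2 fun t ht => ?_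
    obtain rfl | ⟨y, hy, rfl⟩ := Finset.mem_insert.1 ht |>.imp_right Finset.mem_image.1
    · exact one_pos
    · have := ha x y ((G.mem_neighborFinset x y).1 hy)
      positivity
  · cases p with
    | nil => exact absurd rfl hu
    | cons h q =>
      rw [wlen_cons]
      have hle := lengths.min'_le _
        (mem_insert_of_mem (mem_image_of_mem _ ((G.mem_neighborFinset _ _).2 h)))
      linarith [wlen_nonneg (a := a) q]

lemma not_summable_of_metComplete (hG : G.Preconnected) (ha : ∀ x y, G.Adj x y → 0 < a x y)
    (hsym : ∀ x y, a x y = a y x) (hcomp : metComplete G a) {x : ℕ → V}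
    (hx : ∀ n, G.Adj (x n) (x (n + 1))) : ¬ Summable fun n => 1 / √(a (x n) (x (n + 1))) := by
  intro hsum
  set S := fun n => ∑ k ∈ range n, 1 / √(a (x k) (x (k + 1)))
  have hdist : ∀ m n, pdist G a (x m) (x n) ≤ dist (S m) (S n) := by
    intro m n
    rcases le_total m n with h | h
    · rw [Real.dist_eq, abs_sub_comm]
      exact (pdist_le_sum_range hG hx h).trans (le_abs_self _)
    · rw [Real.dist_eq, pdist_comm hG hsym]
      exact (pdist_le_sum_range hG hx h).trans (le_abs_self _)
  obtain ⟨y, hy⟩ := hcomp x fun ε hε => by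
    obtain ⟨N, hN⟩ := Metric.cauchySeq_iff.1 hsum.tendsto_sum_tsum_nat.cauchySeq ε hε
    exact ⟨N, fun m hm n hn => (hdist m n).trans_lt (hN m hm n hn)⟩
  obtain ⟨ε, hε, hεy⟩ := exists_pos_le_pdist hG ha y
  obtain ⟨N, hN⟩ := hy ε hε
  have hconst : ∀ n ≥ N, x n = y := fun n hn => by
    by_contra hne
    exact (hεy (x n) hne).not_gt (pdist_comm hG hsym y (x n) ▸ hN n hn)
  exact (hx N).ne ((hconst N le_rfl).trans (hconst (N + 1) (by omega)).symm)

lemma exists_adj_infinite_pdist_lt (hG : G.Preconnected) {x : V} {s : ℝ}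
    (h : {z | pdist G a x z < s}.Infinite) :
    ∃ y, G.Adj x y ∧ {z | pdist G a y z < s - 1 / √(a x y)}.Infinite := by
  by_contra! hfin
  refine h (((G.neighborFinset x).finite_toSet.biUnion fun y hy =>
    hfin y ((G.mem_neighborFinset x y).1 hy)).insert x |>.subset ?_)
  intro z hz
  obtain ⟨p, hp⟩ := exists_wlen_lt (hG x z) hz
  cases p with
  | nil => exact Set.mem_insert _ _
  | @cons _ y _ hxy q =>
    refine Set.mem_insert_of_mem _ (Set.mem_biUnion ((G.mem_neighborFinset x y).2 hxy) ?_)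
    rw [wlen_cons] at hp
    exact lt_of_le_of_lt (pdist_le_wlen q) (by linarith)

theorem finite_pdist_lt (hG : G.Preconnected) (ha : ∀ x y, G.Adj x y → 0 < a x y)
    (hsym : ∀ x y, a x y = a y x) (hcomp : metComplete G a) (o : V) (r : ℝ) :
    {z | pdist G a o z < r}.Finite := by
  by_contra hinf
  let Ball := {p : V × ℝ // {z | pdist G a p.1 z < p.2}.Infinite}
  choose next hadj hnext using fun p : Ball => exists_adj_infinite_pdist_lt hG p.2
  let step : Ball → Ball := fun p => ⟨(next p, p.1.2 - 1 / √(a p.1.1 (next p))), hnext p⟩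
  let seq : ℕ → Ball := fun n => step^[n] ⟨(o, r), hinf⟩
  have hseq : ∀ n, seq (n + 1) = step (seq n) := fun n => Function.iterate_succ_apply' _ _ _
  have hx : ∀ n, G.Adj (seq n).1.1 (seq (n + 1)).1.1 := fun n => hseq n ▸ hadj (seq n)
  refine not_summable_of_metComplete hG ha hsym hcomp hx
    (summable_of_sum_range_le (c := r) (fun n => by positivity) fun n => ?_)
  have hsum : ∑ k ∈ range n, 1 / √(a (seq k).1.1 (seq (k + 1)).1.1) = r - (seq n).1.2 := by
    induction n with
    | zero => simp [seq]
    | succ n ih => rw [sum_range_succ, ih, hseq]; ring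
  linarith [pos_of_infinite_pdist_lt (seq n).2]

end FiniteBalls

theorem Finset.two_mul_sum_mul_sum_sub {ι R : Type*} [CommRing R] (T : Finset ι)
    (k : ι → ι → R) (hk : ∀ x y, k x y = k y x) (g f : ι → R) :
    2 * ∑ x ∈ T, g x * ∑ y ∈ T, k x y * (f x - f y) =
      ∑ x ∈ T, ∑ y ∈ T, k x y * (g x - g y) * (f x - f y) := by
  have hswap : ∑ x ∈ T, ∑ y ∈ T, k x y * g x * (f x - f y) =
      ∑ x ∈ T, ∑ y ∈ T, -(k x y * g y * (f x - f y)) := by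
    rw [Finset.sum_comm]
    refine sum_congr rfl fun x _ => sum_congr rfl fun y _ => ?_
    rw [hk]
    ring
  calc 2 * ∑ x ∈ T, g x * ∑ y ∈ T, k x y * (f x - f y)
      = ∑ x ∈ T, ∑ y ∈ T, k x y * g x * (f x - f y) +
          ∑ x ∈ T, ∑ y ∈ T, k x y * g x * (f x - f y) := by
        simp only [two_mul, mul_sum, mul_left_comm (g _), mul_assoc, sum_add_distrib]
    _ = ∑ x ∈ T, ∑ y ∈ T, k x y * g x * (f x - f y) +
          ∑ x ∈ T, ∑ y ∈ T, -(k x y * g y * (f x - f y)) := by rw [← hswap]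
    _ = ∑ x ∈ T, ∑ y ∈ T, k x y * (g x - g y) * (f x - f y) := by
        simp only [← sum_add_distrib]
        exact sum_congr rfl fun x _ => sum_congr rfl fun y _ => by ring

lemma sum_sum_ite_adj_le {G : SimpleGraph V} [∀ x : V, Fintype (G.neighborSet x)]
    [DecidableRel G.Adj] {N : ℕ} (hdeg : ∀ x, (G.neighborFinset x).card ≤ N) (T : Finset V)
    {F : V → ℝ} (hF : ∀ x, 0 ≤ F x) :
    ∑ x ∈ T, ∑ y ∈ T, (if G.Adj x y then F x else 0) ≤ N * ∑ x ∈ T, F x := by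
  rw [mul_sum]
  refine sum_le_sum fun x _ => ?_
  rw [← sum_filter, sum_const, nsmul_eq_mul]
  have hcard : (T.filter (G.Adj x)).card ≤ N :=
    (card_le_card fun y hy => (G.mem_neighborFinset x y).2 (mem_filter.1 hy).2).trans (hdeg x)
  exact mul_le_mul_of_nonneg_right (by exact_mod_cast hcard) (hF x)

lemma mul_mul_sq_le_of_abs_le {c wx wy u v t R : ℝ} (hc : 0 < c) (hwx : 0 < wx) (hwy : 0 < wy)
    (hR : 0 < R) (ht : |t| ≤ 1 / √(c / (wx * wy)) / R) :
    c * (u * v) * t ^ 2 ≤ (wx ^ 2 * u ^ 2 + wy ^ 2 * v ^ 2) / (2 * R ^ 2) := by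
  have hpos : 0 < c / (wx * wy) := by positivity
  have ht2 : t ^ 2 ≤ wx * wy / (c * R ^ 2) := by
    calc t ^ 2 = |t| ^ 2 := (sq_abs t).symm
      _ ≤ (1 / √(c / (wx * wy)) / R) ^ 2 := by gcongr
      _ = wx * wy / (c * R ^ 2) := by
        rw [div_pow, div_pow, Real.sq_sqrt hpos.le]
        field_simp
  calc c * (u * v) * t ^ 2 ≤ c * |u * v| * t ^ 2 := by gcongr; exact le_abs_self _
    _ ≤ c * |u * v| * (wx * wy / (c * R ^ 2)) := by gcongr
    _ = (wx * |u|) * (wy * |v|) / R ^ 2 := by rw [abs_mul]; field_simp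
    _ ≤ ((wx * |u|) ^ 2 + (wy * |v|) ^ 2) / 2 / R ^ 2 := by
      gcongr
      linarith [two_mul_le_add_sq (wx * |u|) (wy * |v|)]
    _ = (wx ^ 2 * u ^ 2 + wy ^ 2 * v ^ 2) / (2 * R ^ 2) := by
      rw [mul_pow, mul_pow, sq_abs, sq_abs, div_div]

section Cutoff

variable {G : SimpleGraph V} {a : V → V → ℝ}

noncomputable def cutoff (G : SimpleGraph V) (a : V → V → ℝ) (o : V) (R : ℝ) (x : V) : ℝ :=
  max (1 - pdist G a o x / R) 0

lemma cutoff_self (o : V) (R : ℝ) : cutoff G a o R o = 1 := by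
  simp [cutoff, pdist_self]

lemma pdist_lt_of_cutoff_ne_zero {o x : V} {R : ℝ} (hR : 0 < R) (h : cutoff G a o R x ≠ 0) :
    pdist G a o x < R := by
  by_contra! hle
  exact h (max_eq_right (by rw [sub_nonpos, le_div_iff₀ hR]; linarith))

lemma abs_cutoff_sub_le (hG : G.Preconnected) (hsym : ∀ x y, a x y = a y x) (o : V) {R : ℝ}
    (hR : 0 < R) {x y : V} (hxy : G.Adj x y) :
    |cutoff G a o R x - cutoff G a o R y| ≤ 1 / √(a x y) / R := by
  have hxy' : |pdist G a o y - pdist G a o x| ≤ 1 / √(a x y) := by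
    rw [abs_sub_le_iff]
    have h₁ := pdist_triangle (a := a) hG o x y
    have h₂ := pdist_triangle (a := a) hG o y x
    have h₃ := pdist_le_of_adj (a := a) hxy
    have h₄ := pdist_le_of_adj (a := a) hxy.symm
    rw [hsym y x] at h₄
    constructor <;> linarith
  calc |cutoff G a o R x - cutoff G a o R y|
      ≤ |(1 - pdist G a o x / R) - (1 - pdist G a o y / R)| := abs_max_sub_max_le_abs _ _ _
    _ = |pdist G a o y - pdist G a o x| / R := by
      rw [← abs_of_pos hR, ← abs_div, abs_of_pos hR]
      ring_nf
    _ ≤ 1 / √(a x y) / R := by gcongr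

end Cutoff

lemma sum_neighborFinset_eq_of_lapW_add_eq_zero {G : SimpleGraph V}
    [∀ x : V, Fintype (G.neighborSet x)] {ω f : V → ℝ} {c : V → V → ℝ} {x : V} (hω : ω x ≠ 0)
    (h : lapW G ω c f x + f x = 0) :
    ∑ y ∈ G.neighborFinset x, c x y * (f x - f y) = -(ω x ^ 2 * f x) := by
  rw [lapW] at h
  field_simp at h
  linarith

section Energy

variable {G : SimpleGraph V} [∀ x : V, Fintype (G.neighborSet x)] [DecidableRel G.Adj]
  {ω f : V → ℝ} {c : V → V → ℝ}

lemma sum_sq_mul_sq_mul_sq_le (hc : ∀ x y, G.Adj x y → 0 < c x y) (hcs : ∀ x y, c x y = c y x)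
    (hsol : ∀ x, ∑ y ∈ G.neighborFinset x, c x y * (f x - f y) = -(ω x ^ 2 * f x))
    {η : V → ℝ} {T : Finset V} (hT : ∀ x ∈ T, η x ≠ 0 → G.neighborFinset x ⊆ T) :
    ∑ x ∈ T, ω x ^ 2 * η x ^ 2 * f x ^ 2 ≤
      1 / 2 * ∑ x ∈ T, ∑ y ∈ T,
        if G.Adj x y then c x y * (f x * f y) * (η x - η y) ^ 2 else 0 := by
  set k : V → V → ℝ := fun x y => if G.Adj x y then c x y else 0
  have hk : ∀ x y, k x y = k y x := fun x y => by simp only [k, G.adj_comm x y, hcs x y]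
  have hk0 : ∀ x y, 0 ≤ k x y := fun x y => by
    simp only [k]
    split_ifs with h
    exacts [(hc x y h).le, le_rfl]
  have hlocal : ∀ x ∈ T, η x ^ 2 * f x * ∑ y ∈ T, k x y * (f x - f y) =
      -(ω x ^ 2 * η x ^ 2 * f x ^ 2) := by
    intro x hx
    by_cases hη : η x = 0
    · simp [hη]
    have hnbr : ∑ y ∈ T, k x y * (f x - f y) = ∑ y ∈ G.neighborFinset x, c x y * (f x - f y) := by
      rw [← sum_subset (hT x hx hη) fun y _ hy => by
        simp [k, (G.mem_neighborFinset x y).not.1 hy]]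
      exact sum_congr rfl fun y hy => by simp [k, (G.mem_neighborFinset x y).1 hy]
    rw [hnbr, hsol]
    ring
  have hgreen := Finset.two_mul_sum_mul_sum_sub T k hk (fun x => η x ^ 2 * f x) f
  have hsplit : ∀ x y, k x y * (η x ^ 2 * f x - η y ^ 2 * f y) * (f x - f y) =
      k x y * (η x * f x - η y * f y) ^ 2 -
        if G.Adj x y then c x y * (f x * f y) * (η x - η y) ^ 2 else 0 := fun x y => by
    simp only [k]
    split_ifs <;> ring
  have hsq : 0 ≤ ∑ x ∈ T, ∑ y ∈ T, k x y * (η x * f x - η y * f y) ^ 2 :=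
    sum_nonneg fun x _ => sum_nonneg fun y _ => mul_nonneg (hk0 x y) (sq_nonneg _)
  simp only [sum_congr rfl hlocal, sum_neg_distrib, hsplit, sum_sub_distrib] at hgreen
  linarith

lemma sum_sum_ite_adj_mul_sq_sub_le {N : ℕ} (hdeg : ∀ x, (G.neighborFinset x).card ≤ N)
    (hω : ∀ x, 0 < ω x) (hc : ∀ x y, G.Adj x y → 0 < c x y) {η : V → ℝ} {R : ℝ} (hR : 0 < R)
    (hη : ∀ x y, G.Adj x y → |η x - η y| ≤ 1 / √(c x y / (ω x * ω y)) / R) (T : Finset V) :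
    ∑ x ∈ T, ∑ y ∈ T, (if G.Adj x y then c x y * (f x * f y) * (η x - η y) ^ 2 else 0) ≤
      N * (∑ x ∈ T, ω x ^ 2 * f x ^ 2) / R ^ 2 := by
  set F : V → ℝ := fun x => ω x ^ 2 * f x ^ 2
  have hF : ∀ x, 0 ≤ F x := fun x => by positivity
  calc ∑ x ∈ T, ∑ y ∈ T, (if G.Adj x y then c x y * (f x * f y) * (η x - η y) ^ 2 else 0)
      ≤ ∑ x ∈ T, ∑ y ∈ T,
          ((if G.Adj x y then F x else 0) + (if G.Adj x y then F y else 0)) / (2 * R ^ 2) := by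
        refine sum_le_sum fun x _ => sum_le_sum fun y _ => ?_
        split_ifs with h
        · exact mul_mul_sq_le_of_abs_le (hc x y h) (hω x) (hω y) hR (hη x y h)
        · simp
    _ = (∑ x ∈ T, ∑ y ∈ T, (if G.Adj x y then F x else 0) +
          ∑ x ∈ T, ∑ y ∈ T, (if G.Adj x y then F y else 0)) / (2 * R ^ 2) := by
        simp only [← sum_div, sum_add_distrib]
    _ ≤ (N * ∑ x ∈ T, F x + N * ∑ x ∈ T, F x) / (2 * R ^ 2) := by
        gcongr
        · exact sum_sum_ite_adj_le hdeg T hF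
        · rw [sum_comm]
          simp only [G.adj_comm _ _]
          exact sum_sum_ite_adj_le hdeg T hF
    _ = N * (∑ x ∈ T, F x) / R ^ 2 := by
        field_simp
        ring

end Energy

lemma sq_mul_sq_le_of_finite_pdist_lt {G : SimpleGraph V} [∀ x : V, Fintype (G.neighborSet x)]
    (hG : G.Preconnected) {N : ℕ} (hdeg : ∀ x, (G.neighborFinset x).card ≤ N)
    {ω : V → ℝ} (hω : ∀ x, 0 < ω x) {c : V → V → ℝ} (hc : ∀ x y, G.Adj x y → 0 < c x y)
    (hcs : ∀ x y, c x y = c y x) {f : V → ℝ} (hf : Summable fun x => ω x ^ 2 * f x ^ 2)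
    (hsol : ∀ x, ∑ y ∈ G.neighborFinset x, c x y * (f x - f y) = -(ω x ^ 2 * f x))
    (o : V) {R : ℝ} (hR : 0 < R)
    (hfin : {x | pdist G (fun x y => c x y / (ω x * ω y)) o x < R}.Finite) :
    ω o ^ 2 * f o ^ 2 ≤ N * (∑' x, ω x ^ 2 * f x ^ 2) / (2 * R ^ 2) := by
  classical
  set a : V → V → ℝ := fun x y => c x y / (ω x * ω y)
  have hsym : ∀ x y, a x y = a y x := fun x y => by simp only [a, hcs x y, mul_comm]
  set η := cutoff G a o R
  obtain ⟨B, hB⟩ := hfin.exists_finset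
  set T := B ∪ B.biUnion fun x => G.neighborFinset x
  have hT : ∀ x ∈ T, η x ≠ 0 → G.neighborFinset x ⊆ T := fun x _ hx =>
    (subset_biUnion_of_mem (fun x => G.neighborFinset x)
      ((hB x).2 (pdist_lt_of_cutoff_ne_zero hR hx))).trans subset_union_right
  have hoT : o ∈ T := mem_union_left _ ((hB o).2 (by simp [pdist_self, hR]))
  calc ω o ^ 2 * f o ^ 2 = ω o ^ 2 * η o ^ 2 * f o ^ 2 := by
        rw [show η o = 1 from cutoff_self o R]; ring
    _ ≤ ∑ x ∈ T, ω x ^ 2 * η x ^ 2 * f x ^ 2 :=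
        single_le_sum (f := fun x => ω x ^ 2 * η x ^ 2 * f x ^ 2) (fun _ _ => by positivity) hoT
    _ ≤ 1 / 2 * ∑ x ∈ T, ∑ y ∈ T,
          if G.Adj x y then c x y * (f x * f y) * (η x - η y) ^ 2 else 0 :=
        sum_sq_mul_sq_mul_sq_le hc hcs hsol hT
    _ ≤ 1 / 2 * (N * (∑ x ∈ T, ω x ^ 2 * f x ^ 2) / R ^ 2) := by
        gcongr
        exact sum_sum_ite_adj_mul_sq_sub_le hdeg hω hc hR
          (fun x y hxy => abs_cutoff_sub_le hG hsym o hR hxy) T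
    _ ≤ 1 / 2 * (N * (∑' x, ω x ^ 2 * f x ^ 2) / R ^ 2) := by
        gcongr
        exact hf.sum_le_tsum T fun _ _ => by positivity
    _ = N * (∑' x, ω x ^ 2 * f x ^ 2) / (2 * R ^ 2) := by ring

/-- main theorem: bounded valence and completeness of `δ_a` with
`a_{xy} = c_{xy}/(ω_x ω_y)` imply essential self-adjointness of `Δ_{ω,c}` on
`C₀(V) ⊂ ℓ²_ω(V)`, i.e. the only `f ∈ ℓ²_ω` with `Δ_{ω,c} f + f = 0` is `f ≡ 0`. -/
theorem stmt13 (G : SimpleGraph V) [∀ x : V, Fintype (G.neighborSet x)]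
    (hG : G.Connected) [Infinite V]
    (N : ℕ) (hdeg : ∀ x, (G.neighborFinset x).card ≤ N)
    (ω : V → ℝ) (hω : ∀ x, 0 < ω x)
    (c : V → V → ℝ) (hc : ∀ x y, G.Adj x y → 0 < c x y)
    (hcs : ∀ x y, c x y = c y x)
    (hcomp : metComplete G (fun x y => c x y / (ω x * ω y))) :
    ∀ f : V → ℝ, Summable (fun x => (ω x) ^ 2 * (f x) ^ 2) →
      (∀ x, lapW G ω c f x + f x = 0) → f = 0 := by
  intro f hf hlap
  have hsol x := sum_neighborFinset_eq_of_lapW_add_eq_zero (hω x).ne' (hlap x)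
  have ha x y (h : G.Adj x y) : 0 < c x y / (ω x * ω y) :=
    div_pos (hc x y h) (mul_pos (hω x) (hω y))
  have hsym x y : c x y / (ω x * ω y) = c y x / (ω y * ω x) := by rw [hcs, mul_comm (ω x)]
  funext o
  show f o = 0
  have hbound : ∀ᶠ R in Filter.atTop,
      ω o ^ 2 * f o ^ 2 ≤ N * (∑' x, ω x ^ 2 * f x ^ 2) / (2 * R ^ 2) :=
    (Filter.eventually_gt_atTop 0).mono fun R hR =>
      sq_mul_sq_le_of_finite_pdist_lt hG.preconnected hdeg hω hc hcs hf hsol o hR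
        (finite_pdist_lt hG.preconnected ha hsym hcomp o R)
  have hlim : Filter.Tendsto (fun R : ℝ => N * (∑' x, ω x ^ 2 * f x ^ 2) / (2 * R ^ 2))
      Filter.atTop (nhds 0) :=
    tendsto_const_nhds.div_atTop ((Filter.tendsto_pow_atTop two_ne_zero).const_mul_atTop two_pos)
  have hnonpos := ge_of_tendsto hlim hbound
  have hωo : 0 < ω o ^ 2 := by have := hω o; positivity
  exact pow_eq_zero_iff two_ne_zero |>.1 <|
    le_antisymm (nonpos_of_mul_nonpos_right hnonpos hωo) (sq_nonneg _)
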